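/- Every direction of a mixed expansion admits a dropler effect from the mixed expansion as source: let σ : Fin l → Fin n with l ≥ 1, let M = E_{σ(1)} ∘ ⋯ ∘ E_{σ(l)}, let S be a tuple, let j : Fin l, and let Φ be the least positive integer with E_{σ(j)}^Φ S = 0. Then E_{σ(j)}^{Φ−1} (M S) = 0; in particular there exists k < Φ with E_{σ(j)}^k (M S) = 0. -/

import Mathlib

open MvPolynomial MeasureTheory

/-- The expansion operator in direction `i`: the paper's composite map
`(γ⁻¹ ∘ β ∘ γ ∘ ∇)_{[x_i]}`, sending a tuple `S` to the tuple whose `k`-th entry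
is the sum of the partial derivatives (in direction `i`) of all other entries. -/
noncomputable def expandDir {s n : ℕ} (i : Fin n) (S : Fin s → MvPolynomial (Fin n) ℝ) :
    Fin s → MvPolynomial (Fin n) ℝ :=
  fun k => ∑ t ∈ Finset.univ.filter (fun t => t ≠ k), MvPolynomial.pderiv i (S t)

/-- The mixed expansion operator `M = E_{σ 0} ∘ E_{σ 1} ∘ ⋯ ∘ E_{σ (l-1)}`. -/
noncomputable def mixedExpand {s n l : ℕ} (σ : Fin l → Fin n) :
    (Fin s → MvPolynomial (Fin n) ℝ) → (Fin s → MvPolynomial (Fin n) ℝ) :=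
  (List.ofFn (fun i => expandDir (s := s) (σ i))).foldr (fun f g => f ∘ g) id

/-! The expansion operators `E_i` commute (partial derivatives do) and fix `0`. Hence the
factor `E_{σ j}` of `M` can be moved to the front of `M`, and `E_{σ j}^{Φ-1} (M S)` is the
remaining factors of `M` applied to `E_{σ j}^Φ S = 0`. -/

theorem MvPolynomial.pderiv_pderiv_comm {R ι : Type*} [CommSemiring R] (i j : ι)
    (p : MvPolynomial ι R) : pderiv i (pderiv j p) = pderiv j (pderiv i p) := by
  induction p using MvPolynomial.induction_on' with
  | add p q hp hq => simp [hp, hq]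
  | monomial s a =>
    rcases eq_or_ne i j with rfl | hij
    · rfl
    · simp only [pderiv_monomial]
      rw [Finsupp.tsub_apply, Finsupp.tsub_apply, Finsupp.single_eq_of_ne hij,
        Finsupp.single_eq_of_ne hij.symm, tsub_tsub, tsub_tsub, add_comm]
      simp [mul_right_comm]

namespace List

variable {α : Type*}

theorem commute_foldr_comp {f : α → α} {L : List (α → α)}
    (hcomm : ∀ g ∈ L, Function.Commute f g) : Function.Commute f (L.foldr (· ∘ ·) id) := by
  induction L with
  | nil => exact Function.Commute.id_right
  | cons g L ih =>
    obtain ⟨hfg, hcommL⟩ := forall_mem_cons.mp hcomm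
    exact hfg.comp_right (ih hcommL)

theorem foldr_comp_apply_zero [Zero α] {L : List (α → α)} (hzero : ∀ g ∈ L, g 0 = 0) :
    L.foldr (· ∘ ·) id 0 = 0 := by
  induction L with
  | nil => rfl
  | cons g L ih =>
    obtain ⟨hg, hzeroL⟩ := forall_mem_cons.mp hzero
    simp only [foldr_cons, Function.comp_apply]
    rw [ih hzeroL, hg]

theorem iterate_foldr_comp_eq_zero [Zero α] {f : α → α} {L : List (α → α)} (hf : f ∈ L)
    (hcomm : ∀ g ∈ L, Function.Commute f g) (hzero : ∀ g ∈ L, g 0 = 0) {m : ℕ} {x : α}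
    (hx : f^[m + 1] x = 0) : f^[m] (L.foldr (· ∘ ·) id x) = 0 := by
  induction L with
  | nil => cases hf
  | cons g L ih =>
    obtain ⟨hfg, hcommL⟩ := forall_mem_cons.mp hcomm
    obtain ⟨hg, hzeroL⟩ := forall_mem_cons.mp hzero
    simp only [foldr_cons, Function.comp_apply]
    rcases mem_cons.mp hf with rfl | hfL
    · rw [← Function.iterate_succ_apply, ((commute_foldr_comp hcommL).iterate_left _).eq, hx,
        foldr_comp_apply_zero hzeroL]
    · rw [(hfg.iterate_left m).eq, ih hfL hcommL hzeroL, hg]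

end List

theorem expandDir_zero {s n : ℕ} (i : Fin n) : expandDir (s := s) i 0 = 0 := by
  funext k
  simp [expandDir]

theorem expandDir_commute {s n : ℕ} (i i' : Fin n) :
    Function.Commute (expandDir (s := s) i) (expandDir i') := by
  intro S
  funext k
  simp only [expandDir, map_sum]
  exact Finset.sum_congr rfl fun t _ => Finset.sum_congr rfl fun u _ => pderiv_pderiv_comm _ _ _

theorem dropler_from_mixed_source_general (s n l : ℕ) (σ : Fin l → Fin n)
    (j : Fin l) (S : Fin s → MvPolynomial (Fin n) ℝ) (Φ : ℕ)
    (hΦ : IsLeast {m | 0 < m ∧ (expandDir (σ j))^[m] S = 0} Φ) :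
    (expandDir (σ j))^[Φ - 1] (mixedExpand σ S) = 0 ∧
      ∃ k : ℕ, k < Φ ∧ (expandDir (σ j))^[k] (mixedExpand σ S) = 0 := by
  obtain ⟨⟨hΦpos, hΦS⟩, -⟩ := hΦ
  have hdrop : (expandDir (σ j))^[Φ - 1] (mixedExpand σ S) = 0 :=
    List.iterate_foldr_comp_eq_zero (L := List.ofFn fun i => expandDir (σ i))
      (List.mem_ofFn.mpr ⟨j, rfl⟩) (by simp [expandDir_commute]) (by simp [expandDir_zero])
      (by rw [Nat.sub_add_cancel hΦpos]; exact hΦS)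
  exact ⟨hdrop, Φ - 1, Nat.sub_lt hΦpos one_pos, hdrop⟩

/-- every direction of a mixed expansion admits a dropler effect from the
mixed expansion as source. -/
theorem dropler_from_mixed_source (s n l : ℕ) (hl : 1 ≤ l) (σ : Fin l → Fin n)
    (j : Fin l) (S : Fin s → MvPolynomial (Fin n) ℝ) (Φ : ℕ)
    (hΦ : IsLeast {m | 0 < m ∧ (expandDir (σ j))^[m] S = 0} Φ) :
    (expandDir (σ j))^[Φ - 1] (mixedExpand σ S) = 0 ∧
      ∃ k : ℕ, k < Φ ∧ (expandDir (σ j))^[k] (mixedExpand σ S) = 0 :=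
  dropler_from_mixed_source_general s n l σ j S Φ hΦ
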